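/- Let L be a p/q-changemaker lattice with p > q ≥ 2, with fractional part L_F and vectors v_0, v_1, …, v_m as constructed from the set M. A nonzero vector x ∈ L_F is irreducible in L_F if and only if there exist indices 0 ≤ a ≤ b ≤ m such that x = v_a + v_{a+1} + ⋯ + v_b or x = −(v_a + v_{a+1} + ⋯ + v_b). -/

import Mathlib

/-- The negative continued fraction `[b_0, …, b_n]⁻ = b_0 - 1/[b_1, …, b_n]⁻`. -/
def cfMinus : List ℚ → ℚ
  | [] => 0
  | [b] => b
  | b :: c :: rest => b - 1 / cfMinus (c :: rest)

/-- The standard inner product on `ℤ^ι`. -/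
def dot {ι : Type*} [Fintype ι] (x y : ι → ℤ) : ℤ := ∑ i, x i * y i

/-- The basis vector `f_i` (indices shifted: `fvec t s i` is `f_{i+1}`). -/
def fvec (t s : ℕ) (i : Fin t) : Fin t ⊕ Fin (s + 1) → ℤ := Pi.single (Sum.inl i) 1

/-- The basis vector `e_j`, `0 ≤ j ≤ s`. -/
def evec (t s : ℕ) (j : Fin (s + 1)) : Fin t ⊕ Fin (s + 1) → ℤ := Pi.single (Sum.inr j) 1

/-- The changemaker vector `w_0 = e_0 + σ_1 f_1 + ⋯ + σ_t f_t`. -/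
def w0 (t s : ℕ) (σ : Fin t → ℤ) : Fin t ⊕ Fin (s + 1) → ℤ :=
  Sum.elim σ fun j => if (j : ℕ) = 0 then 1 else 0

/-- The vector `w_k = -e_{m_{k-1}} + e_{m_{k-1}+1} + ⋯ + e_{m_k}` for `k ≥ 1`. -/
def wk (t s : ℕ) (m : ℕ → ℕ) (k : ℕ) : Fin t ⊕ Fin (s + 1) → ℤ :=
  Sum.elim 0 fun j =>
    if (j : ℕ) = m (k - 1) then -1
    else if m (k - 1) < (j : ℕ) ∧ (j : ℕ) ≤ m k then 1 else 0

/-- The vectors `w_0, w_1, …, w_l`. -/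
def wvec (t s : ℕ) (σ : Fin t → ℤ) (m : ℕ → ℕ) (k : ℕ) : Fin t ⊕ Fin (s + 1) → ℤ :=
  if k = 0 then w0 t s σ else wk t s m k

/-- The `p/q`-changemaker lattice `L = ⟨w_0, …, w_l⟩^⊥ ⊆ ℤ^{t+s+1}`. -/
def Lset (t s l : ℕ) (σ : Fin t → ℤ) (m : ℕ → ℕ) : Set (Fin t ⊕ Fin (s + 1) → ℤ) :=
  {x | ∀ k ≤ l, dot x (wvec t s σ m k) = 0}

/-- The fractional part `L_F = ⟨w_1, …, w_l⟩^⊥ ∩ ⟨e_0, …, e_s⟩`. -/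
def LFset (t s l : ℕ) (m : ℕ → ℕ) : Set (Fin t ⊕ Fin (s + 1) → ℤ) :=
  {x | (∀ i, x (Sum.inl i) = 0) ∧ ∀ k, 1 ≤ k → k ≤ l → dot x (wk t s m k) = 0}

/-- The index set `M = {0, 1, …, s} ∖ {m_0, m_1, …, m_l}`. -/
def Mset (s l : ℕ) (m : ℕ → ℕ) : Finset ℕ :=
  (Finset.range (s + 1)).filter fun j => ∀ k ≤ l, j ≠ m k

/-- The least element of `M` (equal to `s` if `M = ∅`). -/
def minM (s l : ℕ) (m : ℕ → ℕ) : ℕ :=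
  if h : (Mset s l m).Nonempty then (Mset s l m).min' h else s

/-- For `k ∈ M`, the least element `k'` of `M` greater than `k`; equal to `s`
if no such element exists. -/
def nxt (s l : ℕ) (m : ℕ → ℕ) (k : ℕ) : ℕ :=
  if h : ((Mset s l m).filter fun j => k < j).Nonempty then
    ((Mset s l m).filter fun j => k < j).min' h
  else s

/-- `v_0 = e_0 + e_1 + ⋯ + e_{min M}` (equal to `e_0 + ⋯ + e_s` if `M = ∅`). -/
def v0vec (t s l : ℕ) (m : ℕ → ℕ) : Fin t ⊕ Fin (s + 1) → ℤ :=
  Sum.elim 0 fun j => if (j : ℕ) ≤ minM s l m then 1 else 0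

/-- `v'_k = -e_k + e_{k+1} + ⋯ + e_{k'}` for `k ∈ M`. -/
def vKvec (t s l : ℕ) (m : ℕ → ℕ) (k : ℕ) : Fin t ⊕ Fin (s + 1) → ℤ :=
  Sum.elim 0 fun j =>
    if (j : ℕ) = k then -1
    else if k < (j : ℕ) ∧ (j : ℕ) ≤ nxt s l m k then 1 else 0

/-- The sequence `v_0, v_1, …, v_m` (`m = |M|`): `v_0` as above, and
`v_1, …, v_m` are the vectors `v'_k`, `k ∈ M`, in increasing order of `k`. -/
def vSeq (t s l : ℕ) (m : ℕ → ℕ) (i : ℕ) : Fin t ⊕ Fin (s + 1) → ℤ :=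
  if i = 0 then v0vec t s l m
  else vKvec t s l m (((Mset s l m).sort (· ≤ ·)).getD (i - 1) 0)

/-- `x_F = Σ_{j=0}^s (x·e_j) e_j`, the projection to the span of the `e_j`. -/
def Fpart (t s : ℕ) (x : Fin t ⊕ Fin (s + 1) → ℤ) : Fin t ⊕ Fin (s + 1) → ℤ :=
  ∑ j, dot x (evec t s j) • evec t s j

/-- `z` is irreducible in the lattice `S`: there are no nonzero `x, y ∈ S`
with `z = x + y` and `x·y ≥ 0`. -/
def IrredIn {ι : Type*} [Fintype ι] (S : Set (ι → ℤ)) (z : ι → ℤ) : Prop :=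
  ¬ ∃ x y : ι → ℤ, x ∈ S ∧ y ∈ S ∧ x ≠ 0 ∧ y ≠ 0 ∧ z = x + y ∧ 0 ≤ dot x y

/-- The data `(t, s, l, a, m, σ)` presents the `p/q`-changemaker lattice
`⟨w_0, …, w_l⟩^⊥ ⊆ ℤ^{t+s+1}`, where `p/q = n − r/q = [a_0, a_1, …, a_l]⁻` with
`a_0 = n`, `a_k ≥ 2` for `1 ≤ k ≤ l`; `m_0 = 0`, `m_k = a_1 + ⋯ + a_k − k`,
`s = m_l`; and `(σ_1, …, σ_t)` is a nondecreasing tuple of nonnegative integers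
satisfying the changemaker condition with `w_0·w_0 = 1 + Σ σ_i² = n`. -/
structure IsCMLattice (p q n r : ℤ) (t s l : ℕ) (a : ℕ → ℤ) (m : ℕ → ℕ)
    (σ : Fin t → ℤ) : Prop where
  hq2 : 2 ≤ q
  hqp : q < p
  hgcd : Int.gcd p q = 1
  hp : p = n * q - r
  hr0 : 0 < r
  hrq : r < q
  ha0 : a 0 = n
  hak : ∀ k, 1 ≤ k → k ≤ l → 2 ≤ a k
  hcf : cfMinus ((List.range (l + 1)).map fun i => (a i : ℚ)) = (p : ℚ) / (q : ℚ)
  hm0 : m 0 = 0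
  hmrec : ∀ k, 1 ≤ k → k ≤ l → (m k : ℤ) = (m (k - 1) : ℤ) + a k - 1
  hs : s = m l
  hσ0 : ∀ i, 0 ≤ σ i
  hσmono : Monotone σ
  hσcm : ∀ i : Fin t, σ i ≤ (∑ j ∈ Finset.univ.filter (· < i), σ j) + 1
  hσn : 1 + ∑ i, σ i ^ 2 = n

/-!
The vectors `v_0, …, v_m` form a basis of `L_F` whose Gram matrix is that of a weighted path:
`v_i` is supported on `[c_i, c_{i+1}]`, where `0 = c_0 < c_1 < ⋯ < c_{m+1} = s` enumerates
`{0} ∪ M ∪ {s}`, so `v_i · v_i = g_i := c_{i+1} - c_i + 1 ≥ 2`, `v_i · v_{i+1} = -1`, and all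
other products vanish. In these coordinates the pairing of `u` and `w` is
`∑ (g_i - 2) u_i w_i + u_0 w_0 + ∑ (u_i - u_{i+1}) (w_i - w_{i+1})`, with `u_{m+1} = w_{m+1} = 0`.

If `u + w = ±(v_a + ⋯ + v_b)`, the coordinates of the sum and their differences lie in
`{0, ±1}`, so every term is `≤ 0`; a nonnegative pairing forces all of them to vanish, and then
`u` or `w` is zero. Conversely, if `z` is not of this form, let `u` be `±` the indicator of the
maximal interval that starts at the first nonzero coordinate of `z` and on which `z` keeps the
sign of that coordinate: every term of the pairing of `u` and `z - u` is then `≥ 0`.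
-/

open Finset

namespace LinearLattice

variable {N a b : ℕ} {g u w z : ℕ → ℤ}

def IsReducible {V : Type*} [AddCommGroup V] (C : AddSubgroup V) (B : V → V → ℤ) (z : V) :
    Prop :=
  ∃ u ∈ C, ∃ w ∈ C, u ≠ 0 ∧ w ≠ 0 ∧ z = u + w ∧ 0 ≤ B u w

lemma isReducible_neg {V : Type*} [AddCommGroup V] {C : AddSubgroup V} {B : V → V → ℤ}
    (hB : ∀ u w, B (-u) (-w) = B u w) {z : V} (h : IsReducible C B z) : IsReducible C B (-z) := by
  obtain ⟨u, hu, w, hw, hu0, hw0, rfl, huw⟩ := h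
  exact ⟨-u, neg_mem hu, -w, neg_mem hw, neg_ne_zero.mpr hu0, neg_ne_zero.mpr hw0,
    neg_add _ _, (hB u w).symm ▸ huw⟩

theorem irredIn_map_iff {ι V : Type*} [Fintype ι] [AddCommGroup V] {C : AddSubgroup V}
    {B : V → V → ℤ} {S : Set (ι → ℤ)} {Φ : V →+ (ι → ℤ)}
    (hmaps : ∀ u ∈ C, Φ u ∈ S) (hsurj : ∀ x ∈ S, ∃ u ∈ C, Φ u = x) (hinj : Set.InjOn Φ C)
    (hB : ∀ u ∈ C, ∀ w ∈ C, dot (Φ u) (Φ w) = B u w) {z : V} (hz : z ∈ C) :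
    IrredIn S (Φ z) ↔ ¬ IsReducible C B z := by
  have hne : ∀ u ∈ C, Φ u ≠ 0 ↔ u ≠ 0 := fun u hu =>
    (map_zero Φ ▸ hinj.eq_iff hu (zero_mem C)).not
  refine not_iff_not.mpr ⟨?_, ?_⟩
  · rintro ⟨_, _, hx, hy, hx0, hy0, hxy, hdot⟩
    obtain ⟨u, hu, rfl⟩ := hsurj _ hx
    obtain ⟨w, hw, rfl⟩ := hsurj _ hy
    exact ⟨u, hu, w, hw, (hne u hu).mp hx0, (hne w hw).mp hy0,
      hinj hz (add_mem hu hw) (by rw [hxy, map_add]), hB u hu w hw ▸ hdot⟩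
  · rintro ⟨u, hu, w, hw, hu0, hw0, rfl, huw⟩
    exact ⟨Φ u, Φ w, hmaps u hu, hmaps w hw, (hne u hu).mpr hu0, (hne w hw).mpr hw0,
      map_add Φ u w, (hB u hu w hw).symm ▸ huw⟩

def coeffs (N : ℕ) : AddSubgroup (ℕ → ℤ) where
  carrier := {u | ∀ i, N < i → u i = 0}
  add_mem' hu hw i hi := by simp [hu i hi, hw i hi]
  zero_mem' _ _ := rfl
  neg_mem' hu i hi := by simp [hu i hi]

/-- In the coordinates of a basis `v_0, …, v_N` with `v_i · v_i = g i`, `v_i · v_{i+1} = -1` and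
all other products zero, this is the inner product. -/
def pathForm (g : ℕ → ℤ) (N : ℕ) (u w : ℕ → ℤ) : ℤ :=
  ∑ i ∈ range (N + 1), g i * u i * w i - ∑ i ∈ range N, (u i * w (i + 1) + u (i + 1) * w i)

noncomputable def ind (a b : ℕ) : ℕ → ℤ := (Set.Icc a b).indicator 1

lemma ind_apply (a b i : ℕ) : ind a b i = if a ≤ i ∧ i ≤ b then 1 else 0 := by
  simp [ind, Set.indicator_apply]

lemma ind_mem_coeffs (hbN : b ≤ N) : ind a b ∈ coeffs N := fun i hi => by
  rw [ind_apply, if_neg (by omega)]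

lemma pathForm_neg_neg : pathForm g N (-u) (-w) = pathForm g N u w := by
  simp [pathForm]

lemma pathForm_eq_sum_edges (g : ℕ → ℤ) (N : ℕ) (u w : ℕ → ℤ) :
    pathForm g N u w = ∑ i ∈ range (N + 1), (g i - 2) * (u i * w i) + u 0 * w 0 + u N * w N
      + ∑ i ∈ range N, (u i - u (i + 1)) * (w i - w (i + 1)) := by
  induction N with
  | zero => simp [pathForm]; ring
  | succ N ih =>
    have h : pathForm g (N + 1) u w = pathForm g N u w + g (N + 1) * u (N + 1) * w (N + 1)
        - (u N * w (N + 1) + u (N + 1) * w N) := by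
      simp only [pathForm, sum_range_succ]; ring
    rw [h, ih, sum_range_succ (fun i => (g i - 2) * (u i * w i)) (N + 1),
      sum_range_succ (fun i => (u i - u (i + 1)) * (w i - w (i + 1))) N]
    ring

lemma pathForm_eq_sum_edges_of_mem (hu : u ∈ coeffs N) (hw : w ∈ coeffs N) :
    pathForm g N u w = ∑ i ∈ range (N + 1), (g i - 2) * (u i * w i) + u 0 * w 0
      + ∑ i ∈ range (N + 1), (u i - u (i + 1)) * (w i - w (i + 1)) := by
  rw [pathForm_eq_sum_edges, sum_range_succ (fun i => (u i - u (i + 1)) * (w i - w (i + 1))) N,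
    hu (N + 1) (by omega), hw (N + 1) (by omega)]
  ring

lemma pathForm_nonneg (hg : ∀ i ≤ N, 2 ≤ g i) (hu : u ∈ coeffs N) (hw : w ∈ coeffs N)
    (hvert : ∀ i, 0 ≤ u i * w i) (hedge : ∀ i, 0 ≤ (u i - u (i + 1)) * (w i - w (i + 1))) :
    0 ≤ pathForm g N u w := by
  rw [pathForm_eq_sum_edges_of_mem hu hw]
  have h1 : 0 ≤ ∑ i ∈ range (N + 1), (g i - 2) * (u i * w i) :=
    sum_nonneg fun i hi => mul_nonneg (by linarith [hg i (by simpa [Nat.lt_succ_iff] using hi)])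
      (hvert i)
  have h2 := sum_nonneg fun i (_ : i ∈ range (N + 1)) => hedge i
  linarith [hvert 0]

lemma edge_terms_eq_zero (hg : ∀ i ≤ N, 2 ≤ g i) (hu : u ∈ coeffs N) (hw : w ∈ coeffs N)
    (hvert : ∀ i, u i * w i ≤ 0) (hedge : ∀ i, (u i - u (i + 1)) * (w i - w (i + 1)) ≤ 0)
    (h : 0 ≤ pathForm g N u w) :
    u 0 * w 0 = 0 ∧ ∀ i, (u i - u (i + 1)) * (w i - w (i + 1)) = 0 := by
  rw [pathForm_eq_sum_edges_of_mem hu hw] at h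
  have h1 : ∑ i ∈ range (N + 1), (g i - 2) * (u i * w i) ≤ 0 :=
    sum_nonpos fun i hi => mul_nonpos_of_nonneg_of_nonpos
      (by linarith [hg i (by simpa [Nat.lt_succ_iff] using hi)]) (hvert i)
  have h2 := sum_nonpos fun i (_ : i ∈ range (N + 1)) => hedge i
  have h0 := hvert 0
  refine ⟨by linarith, fun i => ?_⟩
  rcases lt_or_ge i (N + 1) with hi | hi
  · exact (sum_eq_zero_iff_of_nonpos fun i _ => hedge i).mp (by linarith) i (mem_range.mpr hi)
  · simp [hu i (by omega), hu (i + 1) (by omega)]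

lemma mul_nonpos_of_abs_add_le_one {c d : ℤ} (h : |c + d| ≤ 1) : c * d ≤ 0 := by
  rw [abs_le] at h
  rcases lt_trichotomy c 0 with hc | rfl | hc
  · exact mul_nonpos_of_nonpos_of_nonneg hc.le (by omega)
  · simp
  · exact mul_nonpos_of_nonneg_of_nonpos hc.le (by omega)

lemma eq_of_forall_eq_succ {i j : ℕ} (hij : i ≤ j) (h : ∀ k, i ≤ k → k < j → u k = u (k + 1)) :
    u i = u j := by
  induction j, hij using Nat.le_induction with
  | base => rfl
  | succ j hij ih => rw [ih fun k hk hkj => h k hk (by omega), h j hij (by omega)]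

/-- Away from the two jumps of `ind a b` the differences of `u` and `w` cancel, so a vanishing
edge term forces both to vanish. -/
lemma eq_mul_ind (hu : u ∈ coeffs N) (hsum : ∀ i, u i + w i = ind a b i) (hab : a ≤ b)
    (h0 : u 0 * w 0 = 0) (hedge : ∀ i, (u i - u (i + 1)) * (w i - w (i + 1)) = 0) :
    ∀ i, u i = u a * ind a b i := by
  have step : ∀ k, k + 1 ≠ a → k ≠ b → u k = u (k + 1) := by
    intro k hka hkb
    have h := hedge k
    have hk := hsum k
    have hk1 := hsum (k + 1)
    rw [ind_apply] at hk hk1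
    have : w k - w (k + 1) = -(u k - u (k + 1)) := by split_ifs at hk hk1 <;> omega
    rw [this, mul_neg, neg_eq_zero, mul_self_eq_zero, sub_eq_zero] at h
    exact h
  intro i
  rw [ind_apply]
  split_ifs with hi
  · rw [mul_one]
    exact (eq_of_forall_eq_succ hi.1 fun k hk hki => step k (by omega) (by omega)).symm
  · rw [mul_zero]
    rcases lt_or_ge i a with hia | hai
    · have hw0 : w 0 = -u 0 := by have := hsum 0; rw [ind_apply, if_neg (by omega)] at this; omega
      rw [hw0, mul_neg, neg_eq_zero, mul_self_eq_zero] at h0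
      rw [← eq_of_forall_eq_succ (Nat.zero_le i) fun k _ hki => step k (by omega) (by omega), h0]
    · rw [eq_of_forall_eq_succ (by omega : i ≤ i + N + 1) fun k hk _ => step k (by omega)
        (by omega), hu _ (by omega)]

lemma not_isReducible_ind (hg : ∀ i ≤ N, 2 ≤ g i) (hab : a ≤ b) :
    ¬ IsReducible (coeffs N) (pathForm g N) (ind a b) := by
  rintro ⟨u, hu, w, hw, hu0, hw0, hz, hB⟩
  have hsum : ∀ i, u i + w i = ind a b i := fun i => by rw [hz]; rfl
  have hind : ∀ i, ind a b i = 0 ∨ ind a b i = 1 := fun i => by rw [ind_apply]; split_ifs <;> simp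
  obtain ⟨h0, hedge⟩ := edge_terms_eq_zero hg hu hw
    (fun i => mul_nonpos_of_abs_add_le_one (by rw [hsum]; rcases hind i with h | h <;> simp [h]))
    (fun i => mul_nonpos_of_abs_add_le_one (by
      rw [show u i - u (i + 1) + (w i - w (i + 1)) = ind a b i - ind a b (i + 1) by
        linarith [hsum i, hsum (i + 1)]]
      rcases hind i with h | h <;> rcases hind (i + 1) with h' | h' <;> simp [h, h'])) hB
  have hu' := eq_mul_ind hu hsum hab h0 hedge
  have hw' := eq_mul_ind hw (fun i => by rw [add_comm]; exact hsum i) hab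
    (by rw [mul_comm]; exact h0) (fun i => by rw [mul_comm]; exact hedge i)
  have hua : u a * w a = 0 := by
    rcases Nat.eq_zero_or_pos a with rfl | ha
    · exact h0
    · have h := hedge (a - 1)
      rw [Nat.sub_add_cancel ha, hu' (a - 1), hw' (a - 1), ind_apply, if_neg (by omega)] at h
      simpa using h
  rcases mul_eq_zero.mp hua with h | h
  · exact hu0 (funext fun i => by rw [hu' i, h, zero_mul, Pi.zero_apply])
  · exact hw0 (funext fun i => by rw [hw' i, h, zero_mul, Pi.zero_apply])

lemma pathForm_ind_sub_nonneg (hg : ∀ i ≤ N, 2 ≤ g i) (hz : z ∈ coeffs N) (hab : a ≤ b)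
    (hbN : b ≤ N) (ha : ∀ i < a, z i = 0) (hrun : ∀ i, a ≤ i → i ≤ b → 1 ≤ z i) (hnext : z (b + 1) ≤ 0) :
    0 ≤ pathForm g N (ind a b) (z - ind a b) := by
  have hw : ∀ i, (z - ind a b) i = z i - ind a b i := fun _ => rfl
  refine pathForm_nonneg hg (ind_mem_coeffs hbN) (sub_mem hz (ind_mem_coeffs hbN)) (fun i => ?_)
    (fun i => ?_)
  · rw [hw, ind_apply]
    split_ifs with hi
    · linarith [hrun i hi.1 hi.2]
    · simp
  · simp only [hw, ind_apply]
    by_cases hia : i + 1 = a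
    · rw [if_neg (by omega), if_pos (by omega), ha i (by omega)]
      nlinarith [hrun (i + 1) (by omega) (by omega)]
    by_cases hib : i = b
    · subst hib
      rw [if_pos (by omega), if_neg (by omega)]
      nlinarith [hrun i (by omega) (by omega)]
    · have : (if a ≤ i ∧ i ≤ b then (1 : ℤ) else 0) = if a ≤ i + 1 ∧ i + 1 ≤ b then 1 else 0 := by
        split_ifs <;> first | rfl | omega
      rw [this, sub_self, zero_mul]

lemma isReducible_of_pos (hg : ∀ i ≤ N, 2 ≤ g i) (hz : z ∈ coeffs N) (ha : ∀ i < a, z i = 0)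
    (hza : 0 < z a) (hne : ∀ b, a ≤ b → b ≤ N → z ≠ ind a b) :
    IsReducible (coeffs N) (pathForm g N) z := by
  classical
  have hc : ∃ c, a < c ∧ z c ≤ 0 := ⟨a + N + 1, by omega, by rw [hz _ (by omega)]⟩
  obtain ⟨hac, hzc⟩ : a < Nat.find hc ∧ z (Nat.find hc) ≤ 0 := Nat.find_spec hc
  set b := Nat.find hc - 1
  have hrun : ∀ i, a ≤ i → i ≤ b → 1 ≤ z i := by
    intro i hai hib
    rcases hai.eq_or_lt with rfl | hai
    · omega
    · by_contra! h
      exact Nat.find_min hc (show i < Nat.find hc by omega) ⟨hai, by omega⟩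
  have hbN : b ≤ N := by
    by_contra! hb
    have := hrun b (by omega) le_rfl
    rw [hz b hb] at this
    omega
  refine ⟨ind a b, ind_mem_coeffs hbN, z - ind a b, sub_mem hz (ind_mem_coeffs hbN),
    fun h => ?_, fun h => hne b (by omega) hbN (sub_eq_zero.mp h), (add_sub_cancel _ _).symm,
    pathForm_ind_sub_nonneg hg hz (by omega) hbN ha hrun (by rwa [show b + 1 = Nat.find hc by omega])⟩
  have := congrFun h a
  rw [ind_apply, if_pos (by omega)] at this
  exact one_ne_zero this

theorem not_isReducible_iff (hg : ∀ i ≤ N, 2 ≤ g i) (hz : z ∈ coeffs N) (hz0 : z ≠ 0) :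
    ¬ IsReducible (coeffs N) (pathForm g N) z ↔
      ∃ a b, a ≤ b ∧ b ≤ N ∧ (z = ind a b ∨ z = -ind a b) := by
  classical
  constructor
  · intro hirr
    by_contra! hint
    have hex : ∃ i, z i ≠ 0 := Function.ne_iff.mp hz0
    set a := Nat.find hex
    have ha : ∀ i < a, z i = 0 := fun i hi => not_not.mp (Nat.find_min hex hi)
    rcases (Nat.find_spec hex).lt_or_gt with hza | hza
    · refine hirr (neg_neg z ▸ isReducible_neg (fun _ _ => pathForm_neg_neg) ?_)
      refine isReducible_of_pos hg (neg_mem hz) (fun i hi => by simp [ha i hi]) (by simpa using hza)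
        fun b hab hbN h => (hint a b hab hbN).2 ?_
      rw [← h, neg_neg]
    · exact hirr (isReducible_of_pos hg hz ha hza fun b hab hbN h => (hint a b hab hbN).1 h)
  · rintro ⟨a, b, hab, -, rfl | rfl⟩
    · exact not_isReducible_ind hg hab
    · exact fun h => not_isReducible_ind hg hab
        (neg_neg (ind a b) ▸ isReducible_neg (fun _ _ => pathForm_neg_neg) h)

def coeffMap {ι : Type*} (v : ℕ → ι → ℤ) (N : ℕ) : (ℕ → ℤ) →+ (ι → ℤ) where
  toFun u := ∑ i ∈ range (N + 1), u i • v i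
  map_zero' := by simp
  map_add' u w := by simp [add_smul, sum_add_distrib]

variable {ι : Type*} {v : ℕ → ι → ℤ}

lemma coeffMap_apply (u : ℕ → ℤ) : coeffMap v N u = ∑ i ∈ range (N + 1), u i • v i := rfl

lemma coeffMap_ind (hbN : b ≤ N) : coeffMap v N (ind a b) = ∑ i ∈ Icc a b, v i := by
  rw [coeffMap_apply, ← sum_subset (fun i hi => by simp at hi ⊢; omega : Icc a b ⊆ range (N + 1))
    fun i _ hi => by rw [ind_apply, if_neg (by simpa using hi), zero_smul]]
  exact sum_congr rfl fun i hi => by rw [ind_apply, if_pos (by simpa using hi), one_smul]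

lemma sum_range_succ_ite_lt (N : ℕ) (f : ℕ → ℤ) :
    ∑ i ∈ range (N + 1), (if i < N then f i else 0) = ∑ i ∈ range N, f i := by
  rw [sum_range_succ, if_neg (lt_irrefl N), add_zero]
  exact sum_congr rfl fun i hi => if_pos (mem_range.mp hi)

lemma dot_coeffMap [Fintype ι] (hv : ∀ i ≤ N, ∀ j ≤ N, dot (v i) (v j) =
      if i = j then g i else if i + 1 = j ∨ j + 1 = i then -1 else 0) (u w : ℕ → ℤ) :
    dot (coeffMap v N u) (coeffMap v N w) = pathForm g N u w := by
  have hgram : ∀ i ∈ range (N + 1), ∀ j ∈ range (N + 1), dot (v i) (v j) =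
      (if i = j then g i else 0) - (if i + 1 = j then 1 else 0) - (if j + 1 = i then 1 else 0) := by
    intro i hi j hj
    rw [hv i (by simpa [Nat.lt_succ_iff] using hi) j (by simpa [Nat.lt_succ_iff] using hj)]
    split_ifs <;> omega
  calc dot (coeffMap v N u) (coeffMap v N w)
      = ∑ i ∈ range (N + 1), ∑ j ∈ range (N + 1), u i * w j * dot (v i) (v j) := by
        simp only [coeffMap_apply, dot, ← dotProduct.eq_def, sum_dotProduct, dotProduct_sum,
          smul_dotProduct, dotProduct_smul, smul_eq_mul]
        simp only [mul_sum]
        rw [sum_comm]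
        exact sum_congr rfl fun i _ => sum_congr rfl fun j _ => by ring
    _ = pathForm g N u w := by
        rw [sum_congr rfl fun i hi => sum_congr rfl fun j hj => by rw [hgram i hi j hj]]
        simp only [mul_sub, mul_ite, mul_zero, mul_one, sum_sub_distrib, sum_ite_eq, mem_range]
        rw [sum_comm (s := range (N + 1)) (t := range (N + 1))
          (f := fun x y => if y + 1 = x then u x * w y else 0)]
        simp only [sum_ite_eq, mem_range, Nat.add_lt_add_iff_right, sum_range_succ_ite_lt]
        rw [sum_congr rfl fun i hi => if_pos (mem_range.mp hi), pathForm, sum_add_distrib,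
          sub_sub]
        congr 2
        ext i
        ring

end LinearLattice

namespace Changemaker

open LinearLattice

variable {t s l : ℕ} {m : ℕ → ℕ}

lemma dot_comm {ι : Type*} [Fintype ι] (x y : ι → ℤ) : dot x y = dot y x := dotProduct_comm x y

structure IsSubdivision (s l : ℕ) (m : ℕ → ℕ) : Prop where
  one_le : 1 ≤ l
  map_zero : m 0 = 0
  map_last : m l = s
  strictMonoOn : StrictMonoOn m (Set.Iic l)

/-- `l ≥ 1` because for `l = 0` the continued fraction would make `p/q = a_0 = n` an integer. -/
lemma _root_.IsCMLattice.isSubdivision {p q n r : ℤ} {a : ℕ → ℤ} {σ : Fin t → ℤ}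
    (h : IsCMLattice p q n r t s l a m σ) : IsSubdivision s l m where
  one_le := by
    by_contra! hl
    have hcf := h.hcf
    rw [Nat.lt_one_iff.mp hl] at hcf
    simp only [zero_add, List.range_one, List.map_cons, List.map_nil, cfMinus, h.ha0] at hcf
    have hq : (q : ℚ) ≠ 0 := by exact_mod_cast (show q ≠ 0 by linarith [h.hq2])
    have : n * q = p := by exact_mod_cast (eq_div_iff hq).mp hcf
    linarith [h.hp, h.hr0]
  map_zero := h.hm0
  map_last := h.hs.symm
  strictMonoOn := strictMonoOn_Iic_of_lt_succ fun k hk => by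
    rw [Order.succ_eq_add_one]
    have hrec := h.hmrec (k + 1) (by omega) hk
    have hak := h.hak (k + 1) (by omega) hk
    rw [Nat.add_sub_cancel] at hrec
    omega

lemma mem_Mset {j : ℕ} : j ∈ Mset s l m ↔ j ≤ s ∧ ∀ k ≤ l, j ≠ m k := by
  simp [Mset]

namespace IsSubdivision

lemma one_le_s (hm : IsSubdivision s l m) : 1 ≤ s := by
  have := hm.strictMonoOn (by simp) (by simp) hm.one_le
  rw [hm.map_zero, hm.map_last] at this
  omega

lemma le_s (hm : IsSubdivision s l m) {k : ℕ} (hk : k ≤ l) : m k ≤ s :=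
  hm.map_last ▸ hm.strictMonoOn.monotoneOn hk (Set.mem_Iic.mpr le_rfl) hk

lemma lt_s (hm : IsSubdivision s l m) {k : ℕ} (hk : k < l) : m k < s :=
  hm.map_last ▸ hm.strictMonoOn hk.le (Set.mem_Iic.mpr le_rfl) hk

lemma zero_notMem (hm : IsSubdivision s l m) : 0 ∉ Mset s l m := fun h =>
  (mem_Mset.mp h).2 0 (Nat.zero_le l) hm.map_zero.symm

lemma s_notMem (hm : IsSubdivision s l m) : s ∉ Mset s l m := fun h =>
  (mem_Mset.mp h).2 l le_rfl hm.map_last.symm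

lemma mem_Mset_of_lt_of_lt (hm : IsSubdivision s l m) {k j : ℕ} (hk : k < l) (h1 : m k < j)
    (h2 : j < m (k + 1)) : j ∈ Mset s l m := by
  refine mem_Mset.mpr ⟨by linarith [hm.le_s (k := k + 1) hk], fun k' hk' hj => ?_⟩
  subst hj
  rcases le_or_gt k' k with h | h
  · have := hm.strictMonoOn.monotoneOn hk' (Set.mem_Iic.mpr hk.le) h
    omega
  · have := hm.strictMonoOn.monotoneOn (Set.mem_Iic.mpr (show k + 1 ≤ l by omega)) hk'
      (show k + 1 ≤ k' by omega)
    omega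

end IsSubdivision

/-- `chainPt` enumerates `{0} ∪ M ∪ {s}` increasingly; `v_i` is supported on
`[chainPt i, chainPt (i + 1)]`. -/
def chainPt (s l : ℕ) (m : ℕ → ℕ) (i : ℕ) : ℕ :=
  if i = 0 then 0 else ((Mset s l m).sort (· ≤ ·)).getD (i - 1) s

lemma chainPt_zero : chainPt s l m 0 = 0 := rfl

lemma chainPt_eq_getElem {i : ℕ} (h1 : 1 ≤ i) (h2 : i ≤ #(Mset s l m)) :
    chainPt s l m i = ((Mset s l m).sort (· ≤ ·))[i - 1]'(by rw [length_sort]; omega) := by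
  rw [chainPt, if_neg (by omega), List.getD_eq_getElem]

lemma chainPt_mem {i : ℕ} (h1 : 1 ≤ i) (h2 : i ≤ #(Mset s l m)) :
    chainPt s l m i ∈ Mset s l m := by
  rw [chainPt_eq_getElem h1 h2, ← mem_sort (· ≤ ·)]
  exact List.getElem_mem _

lemma chainPt_card_succ : chainPt s l m (#(Mset s l m) + 1) = s := by
  rw [chainPt, if_neg (by omega), List.getD_eq_default _ _ (by simp)]

lemma exists_chainPt_eq {j : ℕ} (hj : j ∈ Mset s l m) :
    ∃ i, 1 ≤ i ∧ i ≤ #(Mset s l m) ∧ chainPt s l m i = j := by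
  obtain ⟨i, hi, rfl⟩ := List.mem_iff_getElem.mp ((mem_sort (· ≤ ·)).mpr hj)
  rw [length_sort] at hi
  exact ⟨i + 1, by omega, by omega, by rw [chainPt_eq_getElem (by omega) (by omega)]; rfl⟩

lemma chainPt_strictMonoOn (hm : IsSubdivision s l m) :
    StrictMonoOn (chainPt s l m) (Set.Iic (#(Mset s l m) + 1)) := by
  refine strictMonoOn_Iic_of_lt_succ fun i hi => ?_
  rw [Order.succ_eq_add_one]
  rcases Nat.eq_zero_or_pos i with rfl | hi0
  · rw [chainPt_zero]
    rcases Nat.eq_zero_or_pos #(Mset s l m) with hN | hN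
    · rw [zero_add, show 1 = #(Mset s l m) + 1 by omega, chainPt_card_succ]
      exact hm.one_le_s
    · exact Nat.pos_of_ne_zero fun h => hm.zero_notMem (h ▸ chainPt_mem le_rfl hN)
  · rcases (Nat.lt_succ_iff.mp hi).lt_or_eq with hiN | rfl
    · rw [chainPt_eq_getElem hi0 hiN.le, chainPt_eq_getElem (i := i + 1) (by omega) hiN]
      exact List.pairwise_iff_getElem.mp (sortedLT_sort _).pairwise _ _ _ _ (by omega)
    · rw [chainPt_card_succ]
      have hmem := chainPt_mem (s := s) (l := l) (m := m) hi0 le_rfl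
      exact lt_of_le_of_ne (mem_Mset.mp hmem).1 fun h => hm.s_notMem (by rwa [h] at hmem)

lemma chainPt_lt_chainPt (hm : IsSubdivision s l m) {i j : ℕ} (hij : i < j)
    (hj : j ≤ #(Mset s l m) + 1) : chainPt s l m i < chainPt s l m j :=
  chainPt_strictMonoOn hm (Set.mem_Iic.mpr (by omega)) (Set.mem_Iic.mpr hj) hij

lemma chainPt_le_s (hm : IsSubdivision s l m) {i : ℕ} (hi : i ≤ #(Mset s l m) + 1) :
    chainPt s l m i ≤ s := by
  have := (chainPt_strictMonoOn hm).monotoneOn hi (Set.mem_Iic.mpr le_rfl) hi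
  rwa [chainPt_card_succ] at this

lemma notMem_Mset_of_lt_of_lt (hm : IsSubdivision s l m) {i j : ℕ} (hi : i ≤ #(Mset s l m))
    (h1 : chainPt s l m i < j) (h2 : j < chainPt s l m (i + 1)) : j ∉ Mset s l m := fun hj => by
  obtain ⟨i', h1', h2', rfl⟩ := exists_chainPt_eq hj
  have := ((chainPt_strictMonoOn hm).lt_iff_lt (by simp; omega) (by simp; omega)).mp h1
  have := ((chainPt_strictMonoOn hm).lt_iff_lt (by simp; omega) (by simp; omega)).mp h2
  omega

lemma eq_chainPt_succ (hm : IsSubdivision s l m) {i k : ℕ} (hi : i ≤ #(Mset s l m))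
    (hk : k ∈ Mset s l m ∨ k = s) (hlt : chainPt s l m i < k)
    (hle : ∀ j ∈ Mset s l m, chainPt s l m i < j → k ≤ j) : k = chainPt s l m (i + 1) := by
  have hks : k ≤ s := by rcases hk with hk | rfl; exacts [(mem_Mset.mp hk).1, le_rfl]
  have hs := chainPt_le_s hm (i := i + 1) (by omega)
  rcases lt_trichotomy k (chainPt s l m (i + 1)) with h | h | h
  · rcases hk with hk | rfl
    · exact absurd hk (notMem_Mset_of_lt_of_lt hm hi hlt h)
    · omega
  · exact h
  · rcases hi.lt_or_eq with hi' | rfl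
    · have := hle _ (chainPt_mem (i := i + 1) (by omega) (by omega))
        (chainPt_lt_chainPt hm (by omega) (by omega))
      omega
    · rw [chainPt_card_succ] at h
      omega

lemma minM_eq (hm : IsSubdivision s l m) : minM s l m = chainPt s l m 1 := by
  unfold minM
  split_ifs with h
  · refine eq_chainPt_succ hm (Nat.zero_le _) (Or.inl (min'_mem _ h)) ?_
      fun j hj _ => min'_le _ _ hj
    exact Nat.pos_of_ne_zero fun h0 => hm.zero_notMem (h0 ▸ min'_mem _ h)
  · exact eq_chainPt_succ hm (Nat.zero_le _) (Or.inr rfl) hm.one_le_s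
      fun j hj _ => absurd ⟨j, hj⟩ h

lemma nxt_chainPt (hm : IsSubdivision s l m) {i : ℕ} (hi : i ≤ #(Mset s l m)) :
    nxt s l m (chainPt s l m i) = chainPt s l m (i + 1) := by
  unfold nxt
  split_ifs with h
  · obtain ⟨hmem, hlt⟩ := mem_filter.mp (min'_mem _ h)
    exact eq_chainPt_succ hm hi (Or.inl hmem) hlt
      fun j hj hij => min'_le _ _ (mem_filter.mpr ⟨hj, hij⟩)
  · refine eq_chainPt_succ hm hi (Or.inr rfl) ?_
      fun j hj hij => absurd ⟨j, mem_filter.mpr ⟨hj, hij⟩⟩ h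
    exact lt_of_lt_of_le (chainPt_lt_chainPt hm (i := i) (j := i + 1) (by omega) (by omega))
      (chainPt_le_s hm (by omega))

/-- The common shape `c e_a + e_{a+1} + ⋯ + e_b` of `w_k`, `v_0` and `v'_k`. -/
def block (a b : ℕ) (c : ℤ) (j : ℕ) : ℤ :=
  if j = a then c else if a < j ∧ j ≤ b then 1 else 0

lemma block_eq (a b : ℕ) (c : ℤ) (j : ℕ) :
    block a b c j = c * (if j = a then 1 else 0) + (if j ∈ Ioc a b then 1 else 0) := by
  simp only [block, mem_Ioc]
  split_ifs <;> omega

def ofECoords (t s : ℕ) (X : ℕ → ℤ) : Fin t ⊕ Fin (s + 1) → ℤ :=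
  Sum.elim 0 fun j => X j

def eCoord (x : Fin t ⊕ Fin (s + 1) → ℤ) (j : ℕ) : ℤ :=
  if h : j ≤ s then x (Sum.inr ⟨j, Nat.lt_succ_of_le h⟩) else 0

lemma eCoord_ofECoords {X : ℕ → ℤ} {j : ℕ} (hj : j ≤ s) : eCoord (ofECoords t s X) j = X j := by
  simp [eCoord, ofECoords, hj]

lemma eCoord_sub (x y : Fin t ⊕ Fin (s + 1) → ℤ) (j : ℕ) :
    eCoord (x - y) j = eCoord x j - eCoord y j := by
  unfold eCoord
  split_ifs <;> simp

lemma eCoord_inr (x : Fin t ⊕ Fin (s + 1) → ℤ) (j : Fin (s + 1)) : eCoord x j = x (Sum.inr j) := by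
  simp [eCoord, Nat.le_of_lt_succ j.isLt]

lemma dot_ofECoords (x : Fin t ⊕ Fin (s + 1) → ℤ) (X : ℕ → ℤ) :
    dot x (ofECoords t s X) = ∑ j ∈ range (s + 1), eCoord x j * X j := by
  rw [dot, Fintype.sum_sum_type, ← Fin.sum_univ_eq_sum_range]
  simp [ofECoords, eCoord_inr]

lemma sum_mul_block {a b : ℕ} (ha : a ≤ s) (hb : b ≤ s) (c : ℤ) (Y : ℕ → ℤ) :
    ∑ j ∈ range (s + 1), Y j * block a b c j = c * Y a + ∑ j ∈ Ioc a b, Y j := by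
  simp only [block_eq, mul_add, mul_ite, mul_one, mul_zero, sum_add_distrib, sum_ite_eq',
    mem_range, sum_ite_mem]
  rw [if_pos (by omega), inter_eq_right.mpr fun j hj => by simp at hj ⊢; omega]
  ring

lemma sum_Ioc_block (a b a' b' : ℕ) (c : ℤ) :
    ∑ j ∈ Ioc a b, block a' b' c j
      = c * (if a < a' ∧ a' ≤ b then 1 else 0) + ((min b b' - max a a' : ℕ) : ℤ) := by
  simp only [block_eq, sum_add_distrib, ← mul_sum, sum_ite_eq', sum_boole, filter_mem_eq_inter,
    Ioc_inter_Ioc, Nat.card_Ioc]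
  simp only [mem_Ioc]

lemma dot_ofECoords_block_block {a b a' b' : ℕ} (ha : a ≤ s) (hb : b ≤ s) (c c' : ℤ) :
    dot (ofECoords t s (block a' b' c')) (ofECoords t s (block a b c))
      = c * block a' b' c' a + c' * (if a < a' ∧ a' ≤ b then 1 else 0)
        + ((min b b' - max a a' : ℕ) : ℤ) := by
  rw [dot_ofECoords, sum_congr rfl fun j hj => by
      rw [eCoord_ofECoords (Nat.le_of_lt_succ (mem_range.mp hj))],
    sum_mul_block ha hb, sum_Ioc_block, add_assoc]

def chainVec (s l : ℕ) (m : ℕ → ℕ) (i : ℕ) : ℕ → ℤ :=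
  block (chainPt s l m i) (chainPt s l m (i + 1)) (if i = 0 then 1 else -1)

lemma wk_eq (k : ℕ) : wk t s m k = ofECoords t s (block (m (k - 1)) (m k) (-1)) := rfl

lemma vSeq_eq (hm : IsSubdivision s l m) {i : ℕ} (hi : i ≤ #(Mset s l m)) :
    vSeq t s l m i = ofECoords t s (chainVec s l m i) := by
  unfold vSeq chainVec
  split_ifs with h
  · subst h
    rw [v0vec, minM_eq hm, chainPt_zero]
    funext x
    rcases x with x | x
    · rfl
    · simp only [ofECoords, Sum.elim_inr, block, zero_add]
      split_ifs <;> omega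
  · have : ((Mset s l m).sort (· ≤ ·)).getD (i - 1) 0 = chainPt s l m i := by
      rw [chainPt_eq_getElem (by omega) hi, List.getD_eq_getElem]
    rw [this, ← nxt_chainPt hm hi]
    rfl

/-- No index lies strictly inside the supports of both `v_i` and `w_k` (`hgap`): it would be
outside `M` as an interior index of `v_i` and in `M` as one of `w_k`. The remaining
configurations of the two supports are checked case by case. -/
lemma vSeq_mem_LFset (hm : IsSubdivision s l m) {i : ℕ} (hi : i ≤ #(Mset s l m)) :
    vSeq t s l m i ∈ LFset t s l m := by
  rw [vSeq_eq hm hi]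
  refine ⟨fun _ => rfl, fun k hk1 hkl => ?_⟩
  have hQQ' : m (k - 1) < m k := hm.strictMonoOn (by simp; omega) (by simpa using hkl) (by omega)
  have hQ's := hm.le_s hkl
  have hPP' : chainPt s l m i < chainPt s l m (i + 1) := chainPt_lt_chainPt hm (by omega) (by omega)
  have hP's := chainPt_le_s hm (i := i + 1) (by omega)
  have hgap : min (chainPt s l m (i + 1)) (m k) ≤ max (chainPt s l m i) (m (k - 1)) + 1 := by
    by_contra! h
    exact notMem_Mset_of_lt_of_lt hm (j := max (chainPt s l m i) (m (k - 1)) + 1) hi (by omega)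
      (by omega) (hm.mem_Mset_of_lt_of_lt (k := k - 1) (by omega) (by omega)
        (by rw [Nat.sub_add_cancel hk1]; omega))
  have hP'Q : chainPt s l m (i + 1) ≠ m (k - 1) := by
    rcases hi.lt_or_eq with hi' | rfl
    · exact (mem_Mset.mp (chainPt_mem (i := i + 1) (by omega) hi')).2 (k - 1) (by omega)
    · rw [chainPt_card_succ]
      exact (hm.lt_s (by omega)).ne'
  have hPQ : i ≠ 0 → chainPt s l m i ≠ m (k - 1) ∧ chainPt s l m i ≠ m k := fun h0 =>
    ⟨(mem_Mset.mp (chainPt_mem (by omega) hi)).2 _ (by omega),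
      (mem_Mset.mp (chainPt_mem (by omega) hi)).2 _ hkl⟩
  have hP0 : i = 0 → chainPt s l m i = 0 := fun h0 => by subst h0; rfl
  rw [wk_eq, chainVec, dot_ofECoords_block_block (by omega) hQ's]
  simp only [block]
  split_ifs <;> omega

def gramDiag (s l : ℕ) (m : ℕ → ℕ) (i : ℕ) : ℤ := chainPt s l m (i + 1) - chainPt s l m i + 1

lemma two_le_gramDiag (hm : IsSubdivision s l m) {i : ℕ} (hi : i ≤ #(Mset s l m)) :
    2 ≤ gramDiag s l m i := by
  have := chainPt_lt_chainPt hm (i := i) (j := i + 1) (by omega) (by omega)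
  unfold gramDiag
  omega

lemma dot_vSeq_vSeq (hm : IsSubdivision s l m) {i j : ℕ} (hi : i ≤ #(Mset s l m))
    (hj : j ≤ #(Mset s l m)) :
    dot (vSeq t s l m i) (vSeq t s l m j) =
      if i = j then gramDiag s l m i else if i + 1 = j ∨ j + 1 = i then -1 else 0 := by
  wlog hij : i ≤ j generalizing i j
  · rw [dot_comm, this hj hi (by omega)]
    split_ifs <;> omega
  have h1 : chainPt s l m i < chainPt s l m (i + 1) := chainPt_lt_chainPt hm (by omega) (by omega)
  have h2 : chainPt s l m j < chainPt s l m (j + 1) := chainPt_lt_chainPt hm (by omega) (by omega)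
  rw [vSeq_eq hm hi, vSeq_eq hm hj, chainVec, chainVec,
    dot_ofECoords_block_block (chainPt_le_s hm (by omega)) (chainPt_le_s hm (by omega)), gramDiag]
  have h3 : i + 1 < j → chainPt s l m (i + 1) < chainPt s l m j :=
    fun h => chainPt_lt_chainPt hm h (by omega)
  simp only [block, Nat.min_def, Nat.max_def]
  rcases hij.eq_or_lt with rfl | hij
  · split_ifs <;> omega
  rw [if_neg (show j ≠ 0 by omega)]
  rcases (show i + 1 ≤ j by omega).eq_or_lt with rfl | hij'
  · split_ifs <;> omega
  · have := h3 hij'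
    split_ifs <;> omega

def fractionalPart (t s l : ℕ) (m : ℕ → ℕ) : AddSubgroup (Fin t ⊕ Fin (s + 1) → ℤ) where
  carrier := LFset t s l m
  zero_mem' := ⟨fun _ => rfl, fun _ _ _ => zero_dotProduct _⟩
  add_mem' hx hy := ⟨fun i => by simp [hx.1 i, hy.1 i], fun k h1 h2 => by
    rw [dot, ← dotProduct.eq_def, add_dotProduct]
    exact (congrArg₂ (· + ·) (hx.2 k h1 h2) (hy.2 k h1 h2)).trans (add_zero 0)⟩
  neg_mem' hx := ⟨fun i => by simp [hx.1 i], fun k h1 h2 => by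
    rw [dot, ← dotProduct.eq_def, neg_dotProduct]
    exact neg_eq_zero.mpr (hx.2 k h1 h2)⟩

lemma coeffMap_mem (hm : IsSubdivision s l m) (u : ℕ → ℤ) :
    coeffMap (vSeq t s l m) #(Mset s l m) u ∈ LFset t s l m :=
  (fractionalPart t s l m).sum_mem fun _ hi =>
    (fractionalPart t s l m).zsmul_mem (vSeq_mem_LFset hm (Nat.le_of_lt_succ (mem_range.mp hi))) _

lemma eCoord_coeffMap (hm : IsSubdivision s l m) {j : ℕ} (hj : j ≤ s) (u : ℕ → ℤ) :
    eCoord (coeffMap (vSeq t s l m) #(Mset s l m) u) j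
      = ∑ i ∈ range (#(Mset s l m) + 1), u i * chainVec s l m i j := by
  rw [eCoord, dif_pos hj, coeffMap_apply, Finset.sum_apply]
  refine sum_congr rfl fun i hi => ?_
  rw [Pi.smul_apply, vSeq_eq hm (Nat.le_of_lt_succ (mem_range.mp hi)), smul_eq_mul]
  rfl

lemma eCoord_coeffMap_zero (hm : IsSubdivision s l m) (u : ℕ → ℤ) :
    eCoord (coeffMap (vSeq t s l m) #(Mset s l m) u) 0 = u 0 := by
  rw [eCoord_coeffMap hm (Nat.zero_le s)]
  rw [sum_eq_single_of_mem 0 (by simp) fun i hi hi0 => ?_]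
  · simp [chainVec, block, chainPt_zero]
  · have := chainPt_lt_chainPt hm (Nat.pos_of_ne_zero hi0) (by simp at hi; omega)
    simp only [chainVec, block, chainPt_zero] at this ⊢
    rw [if_neg (by omega), if_neg (by omega), mul_zero]

lemma eCoord_coeffMap_chainPt (hm : IsSubdivision s l m) {k : ℕ} (hk1 : 1 ≤ k)
    (hkN : k ≤ #(Mset s l m)) (u : ℕ → ℤ) :
    eCoord (coeffMap (vSeq t s l m) #(Mset s l m) u) (chainPt s l m k) = u (k - 1) - u k := by
  have hmono := chainPt_strictMonoOn hm
  rw [eCoord_coeffMap hm (chainPt_le_s hm (by omega))]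
  have hterm : ∀ i ∈ range (#(Mset s l m) + 1), u i * chainVec s l m i (chainPt s l m k)
      = (if k = i then -u k else 0) + (if k - 1 = i then u (k - 1) else 0) := by
    intro i hi
    have hi : i ≤ #(Mset s l m) := Nat.le_of_lt_succ (mem_range.mp hi)
    have h1 := hmono.lt_iff_lt (a := i) (b := k) (by simp; omega) (by simp; omega)
    have h2 := hmono.le_iff_le (a := k) (b := i + 1) (by simp; omega) (by simp; omega)
    have h3 := hmono.injOn.eq_iff (x := k) (y := i) (by simp; omega) (by simp; omega)
    simp only [chainVec, block, h1, h2, h3]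
    split_ifs <;> first | omega | (subst_vars; ring)
  rw [sum_congr rfl hterm, sum_add_distrib, sum_ite_eq, sum_ite_eq, if_pos (by simp; omega),
    if_pos (by simp; omega)]
  ring

lemma eCoord_node_eq_sum {y : Fin t ⊕ Fin (s + 1) → ℤ} (hm : IsSubdivision s l m)
    (hy : y ∈ LFset t s l m) {k : ℕ} (hk : k < l) :
    eCoord y (m k) = ∑ j ∈ Ioc (m k) (m (k + 1)), eCoord y j := by
  have h := hy.2 (k + 1) (by omega) (by omega)
  rw [wk_eq, Nat.add_sub_cancel, dot_ofECoords,
    sum_mul_block (hm.le_s hk.le) (hm.le_s (by omega))] at h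
  linarith

/-- The indices strictly between two consecutive nodes lie in `M`, so once `y` vanishes on `M`,
`eCoord_node_eq_sum` carries the value `y_0 = 0` from node to node. -/
lemma eq_zero_of_eCoord_eq_zero (hm : IsSubdivision s l m) {y : Fin t ⊕ Fin (s + 1) → ℤ}
    (hy : y ∈ LFset t s l m) (h0 : eCoord y 0 = 0) (hM : ∀ j ∈ Mset s l m, eCoord y j = 0) :
    y = 0 := by
  have hnode : ∀ k ≤ l, eCoord y (m k) = 0 := by
    intro k hk
    induction k with
    | zero => rwa [hm.map_zero]
    | succ k ih =>
      have hlt : m k < m (k + 1) := hm.strictMonoOn (by simp; omega) (by simpa using hk) (by omega)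
      have h := eCoord_node_eq_sum hm hy (k := k) (by omega)
      rwa [sum_eq_single_of_mem (m (k + 1)) (mem_Ioc.mpr ⟨hlt, le_rfl⟩) fun j hj hne =>
        hM j (hm.mem_Mset_of_lt_of_lt (by omega) (mem_Ioc.mp hj).1
          (lt_of_le_of_ne (mem_Ioc.mp hj).2 hne)), ih (by omega), eq_comm] at h
  funext x
  rcases x with i | j
  · exact hy.1 i
  · rw [Pi.zero_apply, ← eCoord_inr y j]
    by_cases hj : (j : ℕ) ∈ Mset s l m
    · exact hM j hj
    · obtain ⟨k, hk, hjk⟩ : ∃ k ≤ l, (j : ℕ) = m k := by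
        simpa [mem_Mset, Nat.le_of_lt_succ j.isLt] using hj
      rw [hjk, hnode k hk]

/-- The coordinates of `x ∈ L_F` in the basis `v_0, …, v_N`, read off from
`x · e_0 = u_0` and `x · e_{chainPt i} = u_{i-1} - u_i`. -/
def coords (t s l : ℕ) (m : ℕ → ℕ) (x : Fin t ⊕ Fin (s + 1) → ℤ) : ℕ → ℤ
  | 0 => eCoord x 0
  | i + 1 => if i + 1 ≤ #(Mset s l m) then coords t s l m x i - eCoord x (chainPt s l m (i + 1))
      else 0

lemma coords_mem_coeffs (x : Fin t ⊕ Fin (s + 1) → ℤ) :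
    coords t s l m x ∈ coeffs #(Mset s l m) := by
  rintro (_ | i) hi
  · omega
  · rw [coords, if_neg (by omega)]

lemma coeffMap_coords (hm : IsSubdivision s l m) {x : Fin t ⊕ Fin (s + 1) → ℤ}
    (hx : x ∈ LFset t s l m) : coeffMap (vSeq t s l m) #(Mset s l m) (coords t s l m x) = x := by
  refine (sub_eq_zero.mp (eq_zero_of_eCoord_eq_zero hm
    ((fractionalPart t s l m).sub_mem hx (coeffMap_mem hm _)) ?_ fun j hj => ?_)).symm
  · rw [eCoord_sub, eCoord_coeffMap_zero hm, coords, sub_self]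
  · obtain ⟨k, hk1, hkN, rfl⟩ := exists_chainPt_eq hj
    obtain ⟨k, rfl⟩ : ∃ k', k = k' + 1 := ⟨k - 1, by omega⟩
    rw [eCoord_sub, eCoord_coeffMap_chainPt hm hk1 hkN, Nat.add_sub_cancel, coords, if_pos hkN]
    ring

lemma coeffMap_injOn (hm : IsSubdivision s l m) :
    Set.InjOn (coeffMap (vSeq t s l m) #(Mset s l m)) (coeffs #(Mset s l m)) := by
  intro u hu w hw huw
  have hd : coeffMap (vSeq t s l m) #(Mset s l m) (u - w) = 0 := by rw [map_sub, huw, sub_self]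
  have hle : ∀ i ≤ #(Mset s l m), (u - w) i = 0 := by
    intro i hi
    induction i with
    | zero => rw [← eCoord_coeffMap_zero (t := t) hm (u - w), hd]; simp [eCoord]
    | succ i ih =>
      have := eCoord_coeffMap_chainPt (t := t) hm (by omega) hi (u - w)
      rw [hd, Nat.add_sub_cancel, ih (by omega)] at this
      simp only [eCoord, Pi.zero_apply, dite_eq_ite, ite_self, zero_sub] at this
      exact (neg_eq_zero.mp this.symm)
  funext i
  rcases le_or_gt i #(Mset s l m) with hi | hi
  · exact sub_eq_zero.mp (hle i hi)
  · rw [hu i hi, hw i hi]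

end Changemaker

open LinearLattice Changemaker in
/-- Lemma 6.6 of the paper: a nonzero vector `x ∈ L_F` is irreducible in `L_F`
if and only if `x = ±(v_a + v_{a+1} + ⋯ + v_b)` for some `0 ≤ a ≤ b ≤ m`. -/
theorem stmt_9 (p q n r : ℤ) (t s l : ℕ) (a : ℕ → ℤ) (m : ℕ → ℕ) (σ : Fin t → ℤ)
    (h : IsCMLattice p q n r t s l a m σ)
    (x : Fin t ⊕ Fin (s + 1) → ℤ) (hx : x ∈ LFset t s l m) (hx0 : x ≠ 0) :
    IrredIn (LFset t s l m) x ↔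
      ∃ a' b' : ℕ, a' ≤ b' ∧ b' ≤ (Mset s l m).card ∧
        (x = ∑ i ∈ Finset.Icc a' b', vSeq t s l m i ∨
         x = -∑ i ∈ Finset.Icc a' b', vSeq t s l m i) := by
  have hm := h.isSubdivision
  have hinj := coeffMap_injOn (t := t) hm
  obtain ⟨z, hz, rfl⟩ : ∃ z ∈ coeffs #(Mset s l m), coeffMap (vSeq t s l m) _ z = x :=
    ⟨_, coords_mem_coeffs x, coeffMap_coords hm hx⟩
  have hz0 : z ≠ 0 := fun h0 => hx0 (by rw [h0, map_zero])
  rw [irredIn_map_iff (fun u _ => coeffMap_mem hm u)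
      (fun y hy => ⟨_, coords_mem_coeffs y, coeffMap_coords hm hy⟩) hinj
      (fun u _ w _ => dot_coeffMap (fun i hi j hj => dot_vSeq_vSeq hm hi hj) u w) hz,
    not_isReducible_iff (fun i hi => two_le_gramDiag hm hi) hz hz0]
  refine exists₂_congr fun a b => and_congr_right fun _ => and_congr_right fun hb => ?_
  rw [← coeffMap_ind hb, ← map_neg, hinj.eq_iff hz (ind_mem_coeffs hb),
    hinj.eq_iff hz (neg_mem (ind_mem_coeffs hb))]
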